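/- arXiv:1611.04102 — 3 statements merged into one kernel-verified Lean document; each statement's English description precedes it below -/
import Mathlib

section
/- For N a positive integer and |t| < 1, ∑_{k=0}^∞ S_{1,k}(N) t^k = N!/((1−t)(2−t)⋯(N−t)) = N · B(N, 1−t), where B is the Euler beta function. -/
open scoped BigOperators

noncomputable def Sfin (a : ℝ) : ℕ → ℕ → ℝ
  | 0, _ => 1
  | k+1, N => ∑ n ∈ Finset.Icc 1 N, ((n : ℝ) ^ a)⁻¹ * Sfin a k n

noncomputable def Sinf (a : ℝ) : ℕ → ℝ
  | 0 => 1
  | k+1 => ∑' n : ℕ+, ((n : ℝ) ^ a)⁻¹ * Sfin a k n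

lemma Sfin_succ (k N : ℕ) :
    Sfin 1 (k+1) N = ∑ n ∈ Finset.Icc 1 N, ((n : ℝ))⁻¹ * Sfin 1 k n := by
  simp [Sfin, Real.rpow_one]

lemma Sfin_nonneg : ∀ k N, 0 ≤ Sfin 1 k N := by
  intro k
  induction k with
  | zero => intro N; simp [Sfin]
  | succ k ih =>
    intro N
    rw [Sfin_succ]
    refine Finset.sum_nonneg fun n hn => mul_nonneg (by positivity) (ih n)

lemma Sfin_le : ∀ k N, 1 ≤ N → Sfin 1 k N ≤ N := by
  intro k
  induction k with
  | zero => intro N hN; simpa [Sfin] using (by exact_mod_cast hN : (1:ℝ) ≤ N)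
  | succ k ih =>
    intro N hN
    rw [Sfin_succ]
    calc ∑ n ∈ Finset.Icc 1 N, ((n : ℝ))⁻¹ * Sfin 1 k n
        ≤ ∑ n ∈ Finset.Icc 1 N, 1 := by
          refine Finset.sum_le_sum fun n hn => ?_
          have hn1 : 1 ≤ n := (Finset.mem_Icc.mp hn).1
          have hpos : (0:ℝ) < n := by exact_mod_cast hn1
          rw [inv_mul_le_iff₀ hpos, mul_one]
          exact ih n hn1
      _ = N := by simp

lemma Sfin_rec (k N : ℕ) (hN : 1 ≤ N) :
    Sfin 1 (k+1) N = Sfin 1 (k+1) (N-1) + ((N:ℝ))⁻¹ * Sfin 1 k N := by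
  obtain ⟨M, rfl⟩ : ∃ M, N = M + 1 := ⟨N - 1, by omega⟩
  rw [Sfin_succ k (M+1), Finset.sum_Icc_succ_top (by omega), ← Sfin_succ]
  simp

lemma Sfin_summable {t : ℝ} (ht : |t| < 1) (N : ℕ) (hN : 1 ≤ N) :
    Summable (fun k => Sfin 1 k N * t ^ k) := by
  refine Summable.of_norm_bounded (g := fun k => (N:ℝ) * |t| ^ k)
    ((summable_geometric_of_lt_one (abs_nonneg t) ht).mul_left _) fun k => ?_
  rw [norm_mul, norm_pow, Real.norm_eq_abs, Real.norm_eq_abs,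
    abs_of_nonneg (Sfin_nonneg k N)]
  exact mul_le_mul_of_nonneg_right (Sfin_le k N hN) (by positivity)

lemma Sfin_one : ∀ k, Sfin 1 k 1 = 1 := by
  intro k
  induction k with
  | zero => simp [Sfin]
  | succ k ih => rw [Sfin_succ]; simp [ih]



lemma Sfin_zero (a : ℝ) (N : ℕ) : Sfin a 0 N = 1 := rfl


lemma key_lemma {t : ℝ} (ht : |t| < 1) (M : ℕ) (hM : 1 ≤ M) :
    ∑' k, Sfin 1 k (M+1) * t ^ k
      = (∑' k, Sfin 1 k M * t ^ k)
        + (t / (M+1)) * ∑' k, Sfin 1 k (M+1) * t ^ k := by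
  have hsum := Sfin_summable ht (M+1) (by omega)
  have hsumM := Sfin_summable ht M hM
  have h1 : ∀ k : ℕ, Sfin 1 (k+1) (M+1) * t ^ (k+1)
      = Sfin 1 (k+1) M * t ^ (k+1)
        + (t / (M+1)) * (Sfin 1 k (M+1) * t ^ k) := by
    intro k
    have := Sfin_rec k (M+1) (by omega)
    simp only [Nat.add_sub_cancel] at this
    rw [this]
    push_cast
    ring
  have hs1 : Summable (fun k : ℕ => Sfin 1 (k+1) M * t ^ (k+1)) :=
    (summable_nat_add_iff 1).2 hsumM
  have hs2 : Summable (fun k : ℕ => (t / (M+1)) * (Sfin 1 k (M+1) * t ^ k)) :=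
    hsum.mul_left _
  have eA : (∑' k, Sfin 1 k (M+1) * t ^ k)
      = 1 + ∑' k, Sfin 1 (k+1) (M+1) * t ^ (k+1) := by
    rw [Summable.tsum_eq_zero_add hsum, Sfin_zero, pow_zero, one_mul]
  have eM : (∑' k, Sfin 1 k M * t ^ k)
      = 1 + ∑' k, Sfin 1 (k+1) M * t ^ (k+1) := by
    rw [Summable.tsum_eq_zero_add hsumM, Sfin_zero, pow_zero, one_mul]
  have e2 : (∑' k, Sfin 1 (k+1) (M+1) * t ^ (k+1))
      = (∑' k, Sfin 1 (k+1) M * t ^ (k+1))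
        + (t / (M+1)) * ∑' k, Sfin 1 k (M+1) * t ^ k := by
    rw [tsum_congr h1, Summable.tsum_add hs1 hs2, tsum_mul_left]
  calc ∑' k, Sfin 1 k (M+1) * t ^ k
      = 1 + ∑' k, Sfin 1 (k+1) (M+1) * t ^ (k+1) := eA
    _ = 1 + ((∑' k, Sfin 1 (k+1) M * t ^ (k+1))
          + (t / (M+1)) * ∑' k, Sfin 1 k (M+1) * t ^ k) := by rw [e2]
    _ = (1 + ∑' k, Sfin 1 (k+1) M * t ^ (k+1))
          + (t / (M+1)) * ∑' k, Sfin 1 k (M+1) * t ^ k := by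
        rw [add_assoc]
    _ = (∑' k, Sfin 1 k M * t ^ k)
          + (t / (M+1)) * ∑' k, Sfin 1 k (M+1) * t ^ k := by rw [eM]

lemma first_part {t : ℝ} (ht : |t| < 1) :
    ∀ N, 1 ≤ N → ∑' k : ℕ, Sfin 1 k N * t ^ k =
      (N.factorial : ℝ) / ∏ n ∈ Finset.Icc 1 N, ((n : ℝ) - t) := by
  have ht' := abs_lt.mp ht
  intro N
  induction N with
  | zero => omega
  | succ M ih =>
    intro _
    by_cases hM : 1 ≤ M
    · have hF := ih hM
      have key := key_lemma ht M hM
      set A := ∑' k, Sfin 1 k (M+1) * t ^ k with hA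
      set F := ∑' k, Sfin 1 k M * t ^ k with hFdef
      clear_value A F
      have hM1 : ((M:ℝ) + 1) ≠ 0 := by positivity
      have hden : (0:ℝ) < (M:ℝ) + 1 - t := by
        have : (0:ℝ) ≤ (M:ℝ) := by positivity
        linarith
      have hprod : (0:ℝ) < ∏ n ∈ Finset.Icc 1 M, ((n : ℝ) - t) := by
        refine Finset.prod_pos fun n hn => ?_
        have hn1 : 1 ≤ n := (Finset.mem_Icc.mp hn).1
        have : (1:ℝ) ≤ n := by exact_mod_cast hn1
        linarith
      have hsolve : A * (((M:ℝ) + 1) - t) = F * ((M:ℝ) + 1) := by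
        field_simp at key
        linarith
      have hAval : A = F * ((M:ℝ) + 1) / (((M:ℝ) + 1) - t) := by
        rw [eq_div_iff (ne_of_gt hden)]
        exact hsolve
      rw [hAval, hF, Finset.prod_Icc_succ_top (by omega : 1 ≤ M + 1),
        Nat.factorial_succ]
      push_cast
      rw [div_mul_eq_mul_div, div_div]
      rw [div_eq_div_iff (by positivity) (by positivity)]
      ring
    · have hM0 : M = 0 := by omega
      subst hM0
      simp only [zero_add, Nat.reduceAdd, Sfin_one, one_mul]
      rw [tsum_geometric_of_norm_lt_one (by simpa using ht), Finset.Icc_self,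
        Finset.prod_singleton]
      rw [Nat.factorial_one, Nat.cast_one, inv_eq_one_div]

lemma gamma_prod {t : ℝ} (ht : |t| < 1) :
    ∀ N : ℕ, Real.Gamma ((N:ℝ) + (1 - t))
      = Real.Gamma (1 - t) * ∏ n ∈ Finset.Icc 1 N, ((n : ℝ) - t) := by
  have h1t : (0:ℝ) < 1 - t := by have := abs_lt.mp ht; linarith [this.2]
  intro N
  induction N with
  | zero => simp
  | succ M ih =>
    have hpos : (0:ℝ) < (M:ℝ) + (1 - t) := by positivity
    have : ((M+1:ℕ):ℝ) + (1 - t) = ((M:ℝ) + (1 - t)) + 1 := by push_cast; ring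
    rw [this, Real.Gamma_add_one (ne_of_gt hpos), ih,
      Finset.prod_Icc_succ_top (by omega : 1 ≤ M + 1)]
    push_cast
    ring

/-- for `|t| < 1`, `∑ₖ S_{1,k}(N) tᵏ = N!/((1-t)⋯(N-t)) = N·B(N, 1-t)`. -/
theorem statement2 (N : ℕ) (hN : 1 ≤ N) (t : ℝ) (ht : |t| < 1) :
    (∑' k : ℕ, Sfin 1 k N * t ^ k =
        (N.factorial : ℝ) / ∏ n ∈ Finset.Icc 1 N, ((n : ℝ) - t)) ∧
    (N.factorial : ℝ) / ∏ n ∈ Finset.Icc 1 N, ((n : ℝ) - t) =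
      (N : ℝ) * (Real.Gamma N * Real.Gamma (1 - t) / Real.Gamma (N + (1 - t))) := by
  have h1t : (0:ℝ) < 1 - t := by have := abs_lt.mp ht; linarith [this.2]
  refine ⟨first_part ht N hN, ?_⟩
  obtain ⟨M, rfl⟩ : ∃ M, N = M + 1 := ⟨N - 1, by omega⟩
  have hG : Real.Gamma ((M+1:ℕ):ℝ) = (M.factorial : ℝ) := by
    rw [show ((M+1:ℕ):ℝ) = (M:ℝ)+1 by push_cast; ring, Real.Gamma_nat_eq_factorial]
  rw [gamma_prod ht (M+1), hG]
  have hGpos : (0:ℝ) < Real.Gamma (1 - t) := Real.Gamma_pos_of_pos h1t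
  have hprod : (0:ℝ) < ∏ n ∈ Finset.Icc 1 (M+1), ((n : ℝ) - t) := by
    refine Finset.prod_pos fun n hn => ?_
    have hn1 : 1 ≤ n := (Finset.mem_Icc.mp hn).1
    have : (1:ℝ) ≤ n := by exact_mod_cast hn1
    have := abs_lt.mp ht
    linarith [this.2]
  rw [Nat.factorial_succ]
  push_cast
  rw [div_eq_iff (ne_of_gt hprod)]
  field_simp
end

section
/- Let m ≥ 2 be an integer and ξ_m = exp(2πi/m). Then for complex t with |t| < 1, ∑_{k=0}^∞ S_{m,k}(∞) t^{mk} = ∏_{j=0}^{m−1} Γ(1 − ξ_m^j t), where S_{m,k}(∞) = ∑_{n_1 ≥ n_2 ≥ ... ≥ n_k ≥ 1} 1/(n_1 ⋯ n_k)^m. -/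
open scoped BigOperators
open Filter Finset

lemma sfin_nonneg (a : ℝ) : ∀ (k N : ℕ), 0 ≤ Sfin a k N
  | 0, _ => by simp [Sfin]
  | k+1, N => Finset.sum_nonneg fun n hn => by
      have hn1 : 1 ≤ n := (Finset.mem_Icc.mp hn).1
      have hpos : (0:ℝ) < (n:ℝ) ^ a :=
        Real.rpow_pos_of_pos (by exact_mod_cast hn1 : (0:ℝ) < (n:ℝ)) a
      exact mul_nonneg (inv_nonneg.mpr hpos.le) (sfin_nonneg a k n)

lemma sfin_mono (a : ℝ) (k : ℕ) : Monotone (Sfin a k) := by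
  cases k with
  | zero => intro N N' _; simp [Sfin]
  | succ k =>
      intro N N' h
      refine Finset.sum_le_sum_of_subset_of_nonneg (Finset.Icc_subset_Icc_right h) ?_
      intro n hn _
      have hn1 : 1 ≤ n := (Finset.mem_Icc.mp hn).1
      have hpos : (0:ℝ) < (n:ℝ) ^ a :=
        Real.rpow_pos_of_pos (by exact_mod_cast hn1 : (0:ℝ) < (n:ℝ)) a
      exact mul_nonneg (inv_nonneg.mpr hpos.le) (sfin_nonneg a k n)

lemma sfin_one (a : ℝ) : ∀ k, Sfin a k 1 = 1
  | 0 => rfl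
  | k+1 => by
      simp [Sfin, sfin_one a k, Real.one_rpow]

lemma sq_inv_sum_aux : ∀ N : ℕ,
    ∑ n ∈ Finset.Icc 2 (N+1), ((n:ℝ)^2)⁻¹ ≤ 2/3 - (((N:ℝ)+1)+1/2)⁻¹ := by
  intro N
  induction N with
  | zero => norm_num
  | succ N ih =>
      rw [Finset.sum_Icc_succ_top (by omega)]
      have key : (((N:ℝ)+1+1)^2)⁻¹ ≤ (((N:ℝ)+1)+1/2)⁻¹ - (((N:ℝ)+1+1)+1/2)⁻¹ := by
        have h1 : (0:ℝ) < (N:ℝ)+1+1/2 := by positivity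
        have h2 : (0:ℝ) < (N:ℝ)+1+1+1/2 := by positivity
        have h3 : ((N:ℝ)+1+1/2)⁻¹ - ((N:ℝ)+1+1+1/2)⁻¹
            = (((N:ℝ)+1+1/2) * ((N:ℝ)+1+1+1/2))⁻¹ := by
          field_simp
          ring
        rw [h3]
        apply inv_anti₀ (by positivity)
        nlinarith [sq_nonneg ((N:ℝ)+1)]
      push_cast
      push_cast at ih
      linarith

lemma sq_inv_sum_le (N : ℕ) : ∑ n ∈ Finset.Icc 2 N, ((n:ℝ)^2)⁻¹ ≤ 2/3 := by
  cases N with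
  | zero => norm_num
  | succ N =>
      refine (sq_inv_sum_aux N).trans ?_
      have : (0:ℝ) < (((N:ℝ)+1)+1/2)⁻¹ := by positivity
      linarith

lemma rpow_inv_le_sq_inv {m : ℕ} (hm : 2 ≤ m) {n : ℕ} (hn : 1 ≤ n) :
    (((n:ℝ)) ^ (m:ℝ))⁻¹ ≤ ((n:ℝ)^2)⁻¹ := by
  have h1 : (1:ℝ) ≤ (n:ℝ) := by exact_mod_cast hn
  have h2 : (n:ℝ) ^ (2:ℝ) ≤ (n:ℝ) ^ (m:ℝ) :=
    Real.rpow_le_rpow_of_exponent_le h1 (by exact_mod_cast hm)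
  have h3 : (n:ℝ) ^ (2:ℝ) = (n:ℝ)^2 := by
    rw [show ((2:ℝ)) = ((2:ℕ):ℝ) by norm_num, Real.rpow_natCast]
  rw [h3] at h2
  exact inv_anti₀ (by positivity) h2

lemma sfin_le_three (m : ℕ) (hm : 2 ≤ m) : ∀ (k N : ℕ), Sfin (m:ℝ) k N ≤ 3 := by
  intro k
  induction k with
  | zero => intro N; show (1:ℝ) ≤ 3; norm_num
  | succ k ih =>
      intro N
      show (∑ n ∈ Finset.Icc 1 N, ((n : ℝ) ^ (m:ℝ))⁻¹ * Sfin (m:ℝ) k n) ≤ 3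
      rcases Nat.eq_zero_or_pos N with rfl | hN
      · simp
      · have hsplit : Finset.Icc 1 N = insert 1 (Finset.Icc 2 N) := by
          ext n
          simp only [Finset.mem_Icc, Finset.mem_insert]
          omega
        rw [hsplit, Finset.sum_insert (by simp)]
        have h1 : ((1:ℕ):ℝ) ^ (m:ℝ) = 1 := by
          norm_num
        have hterm1 : (((1:ℕ):ℝ) ^ (m:ℝ))⁻¹ * Sfin (m:ℝ) k 1 = 1 := by
          rw [h1, sfin_one]; norm_num
        have htail : (∑ n ∈ Finset.Icc 2 N, ((n : ℝ) ^ (m:ℝ))⁻¹ * Sfin (m:ℝ) k n)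
            ≤ ∑ n ∈ Finset.Icc 2 N, ((n:ℝ)^2)⁻¹ * 3 := by
          refine Finset.sum_le_sum fun n hn => ?_
          have hn1 : 1 ≤ n := by have := (Finset.mem_Icc.mp hn).1; omega
          have hA := rpow_inv_le_sq_inv hm hn1
          have hs0 := sfin_nonneg (m:ℝ) k n
          have hs3 := ih n
          have hinv0 : (0:ℝ) ≤ (((n:ℝ)) ^ (m:ℝ))⁻¹ := by positivity
          calc ((n : ℝ) ^ (m:ℝ))⁻¹ * Sfin (m:ℝ) k n
              ≤ ((n:ℝ)^2)⁻¹ * Sfin (m:ℝ) k n := by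
                exact mul_le_mul_of_nonneg_right hA hs0
            _ ≤ ((n:ℝ)^2)⁻¹ * 3 := by
                have : (0:ℝ) ≤ ((n:ℝ)^2)⁻¹ := by positivity
                exact mul_le_mul_of_nonneg_left hs3 this
        have htail2 : (∑ n ∈ Finset.Icc 2 N, ((n:ℝ)^2)⁻¹ * 3) ≤ 2 := by
          rw [← Finset.sum_mul]
          have := sq_inv_sum_le N
          linarith
        linarith
lemma icc_sum_eq_range {M : Type*} [AddCommMonoid M] (f : ℕ → M) (N : ℕ) :
    ∑ n ∈ Finset.Icc 1 N, f n = ∑ i ∈ Finset.range N, f (i+1) := by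
  induction N with
  | zero => simp
  | succ N ih => rw [Finset.sum_Icc_succ_top (by omega), ih, Finset.sum_range_succ]

lemma icc_prod_eq_range {M : Type*} [CommMonoid M] (f : ℕ → M) (N : ℕ) :
    ∏ n ∈ Finset.Icc 1 N, f n = ∏ i ∈ Finset.range N, f (i+1) := by
  induction N with
  | zero => simp
  | succ N ih => rw [Finset.prod_Icc_succ_top (by omega), ih, Finset.prod_range_succ]

lemma summable_pnat_sq_inv : Summable (fun n : ℕ+ => (((n:ℕ):ℝ)^2)⁻¹) := by
  have h : Summable (fun n : ℕ => ((n:ℝ)^2)⁻¹) := by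
    simpa [one_div] using Real.summable_one_div_nat_pow.mpr (by norm_num : 1 < 2)
  exact h.comp_injective PNat.coe_injective

lemma summable_sfin_term (m : ℕ) (hm : 2 ≤ m) (k : ℕ) :
    Summable (fun n : ℕ+ => (((n:ℕ):ℝ) ^ (m:ℝ))⁻¹ * Sfin (m:ℝ) k n) := by
  refine Summable.of_nonneg_of_le (fun n => ?_) (fun n => ?_)
    (summable_pnat_sq_inv.mul_left 3)
  · have hpos : (0:ℝ) < ((n:ℕ):ℝ) ^ (m:ℝ) :=
      Real.rpow_pos_of_pos (by exact_mod_cast n.pos) _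
    exact mul_nonneg (inv_nonneg.mpr hpos.le) (sfin_nonneg _ _ _)
  · have hA := rpow_inv_le_sq_inv hm n.one_le
    have hs0 := sfin_nonneg (m:ℝ) k n
    have hs3 := sfin_le_three m hm k n
    have h2 : (0:ℝ) ≤ (((n:ℕ):ℝ)^2)⁻¹ := by positivity
    calc (((n:ℕ):ℝ) ^ (m:ℝ))⁻¹ * Sfin (m:ℝ) k n
        ≤ (((n:ℕ):ℝ)^2)⁻¹ * Sfin (m:ℝ) k n := mul_le_mul_of_nonneg_right hA hs0
      _ ≤ (((n:ℕ):ℝ)^2)⁻¹ * 3 := mul_le_mul_of_nonneg_left hs3 h2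
      _ = 3 * (((n:ℕ):ℝ)^2)⁻¹ := by ring

lemma sfin_tendsto_sinf (m : ℕ) (hm : 2 ≤ m) (k : ℕ) :
    Filter.Tendsto (fun N => Sfin (m:ℝ) k N) Filter.atTop (nhds (Sinf (m:ℝ) k)) := by
  cases k with
  | zero => exact tendsto_const_nhds
  | succ k =>
      have hs := (summable_sfin_term m hm k).hasSum
      rw [show Sinf (m:ℝ) (k+1)
          = ∑' n : ℕ+, (((n:ℕ):ℝ) ^ (m:ℝ))⁻¹ * Sfin (m:ℝ) k n from rfl]
      have hs2 : HasSum (fun i : ℕ => (((i:ℝ)+1) ^ (m:ℝ))⁻¹ * Sfin (m:ℝ) k (i+1))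
          (∑' n : ℕ+, (((n:ℕ):ℝ) ^ (m:ℝ))⁻¹ * Sfin (m:ℝ) k n) := by
        have := (Equiv.pnatEquivNat.symm.hasSum_iff).mpr hs
        simpa [Equiv.pnatEquivNat, Function.comp_def] using this
      have h3 := hs2.tendsto_sum_nat
      refine h3.congr fun N => ?_
      rw [show Sfin (m:ℝ) (k+1) N
          = ∑ n ∈ Finset.Icc 1 N, (((n:ℕ):ℝ) ^ (m:ℝ))⁻¹ * Sfin (m:ℝ) k n from rfl,
        icc_sum_eq_range]
      push_cast
      rfl

lemma sinf_nonneg (m : ℕ) (hm : 2 ≤ m) (k : ℕ) : 0 ≤ Sinf (m:ℝ) k :=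
  ge_of_tendsto (sfin_tendsto_sinf m hm k) (Filter.Eventually.of_forall fun N => sfin_nonneg _ _ _)

lemma sinf_le_three (m : ℕ) (hm : 2 ≤ m) (k : ℕ) : Sinf (m:ℝ) k ≤ 3 :=
  le_of_tendsto (sfin_tendsto_sinf m hm k) (Filter.Eventually.of_forall fun N => sfin_le_three m hm k N)
noncomputable def Gfun (m : ℕ) (x : ℂ) (N : ℕ) : ℂ :=
  ∑' k : ℕ, ((Sfin (m:ℝ) k N : ℝ) : ℂ) * x ^ k

noncomputable def Pfun (m : ℕ) (x : ℂ) (N : ℕ) : ℂ :=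
  ∏ n ∈ Finset.Icc 1 N, (1 - x / ((n:ℕ):ℂ) ^ m)

lemma norm_sfin_term_le (m : ℕ) (hm : 2 ≤ m) (x : ℂ) (k N : ℕ) :
    ‖((Sfin (m:ℝ) k N : ℝ) : ℂ) * x ^ k‖ ≤ 3 * ‖x‖ ^ k := by
  rw [norm_mul, norm_pow, Complex.norm_real, Real.norm_eq_abs,
    abs_of_nonneg (sfin_nonneg _ _ _)]
  have h3 := sfin_le_three m hm k N
  have : (0:ℝ) ≤ ‖x‖ ^ k := by positivity
  nlinarith

lemma summable_gfun (m : ℕ) (hm : 2 ≤ m) {x : ℂ} (hx : ‖x‖ < 1) (N : ℕ) :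
    Summable (fun k : ℕ => ((Sfin (m:ℝ) k N : ℝ) : ℂ) * x ^ k) :=
  Summable.of_norm_bounded ((summable_geometric_of_norm_lt_one (K := ℝ)
    (by simpa using hx)).mul_left 3) (norm_sfin_term_le m hm x · N)

lemma gfun_zero (m : ℕ) (x : ℂ) : Gfun m x 0 = 1 := by
  rw [Gfun, tsum_eq_single 0]
  · simp [Sfin]
  · intro k hk
    match k, hk with
    | k+1, _ => simp [Sfin]

lemma gfun_rec (m : ℕ) (hm : 2 ≤ m) {x : ℂ} (hx : ‖x‖ < 1) (N : ℕ) :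
    Gfun m x (N+1) * (1 - x / (((N:ℕ):ℂ)+1) ^ m) = Gfun m x N := by
  have hsum1 := summable_gfun m hm hx (N+1)
  have hsum0 := summable_gfun m hm hx N
  have h1 : ∀ k, Sfin (m:ℝ) (k+1) (N+1)
      = Sfin (m:ℝ) (k+1) N + (((N:ℝ)+1) ^ (m:ℕ))⁻¹ * Sfin (m:ℝ) k (N+1) := by
    intro k
    rw [show Sfin (m:ℝ) (k+1) (N+1)
        = ∑ n ∈ Finset.Icc 1 (N+1), (((n:ℕ):ℝ) ^ (m:ℝ))⁻¹ * Sfin (m:ℝ) k n from rfl,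
      Finset.sum_Icc_succ_top (by omega)]
    rw [show (∑ n ∈ Finset.Icc 1 N, (((n:ℕ):ℝ) ^ (m:ℝ))⁻¹ * Sfin (m:ℝ) k n)
        = Sfin (m:ℝ) (k+1) N from rfl]
    congr 2
    push_cast
    rw [Real.rpow_natCast]
  -- difference of generating functions
  have hd : Gfun m x (N+1) - Gfun m x N
      = ∑' k : ℕ, (((Sfin (m:ℝ) k (N+1) : ℝ):ℂ) - ((Sfin (m:ℝ) k N : ℝ):ℂ)) * x ^ k := by
    rw [Gfun, Gfun, ← Summable.tsum_sub hsum1 hsum0]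
    congr 1; funext k; ring
  have hdsumm : Summable (fun k : ℕ =>
      (((Sfin (m:ℝ) k (N+1) : ℝ):ℂ) - ((Sfin (m:ℝ) k N : ℝ):ℂ)) * x ^ k) := by
    have := hsum1.sub hsum0
    refine this.congr fun k => ?_
    ring
  have hzero : (((Sfin (m:ℝ) 0 (N+1) : ℝ):ℂ) - ((Sfin (m:ℝ) 0 N : ℝ):ℂ)) * x ^ 0 = 0 := by
    show (((1:ℝ):ℂ) - ((1:ℝ):ℂ)) * x ^ 0 = 0
    simp
  have hshift : Gfun m x (N+1) - Gfun m x N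
      = ∑' k : ℕ, (((Sfin (m:ℝ) (k+1) (N+1) : ℝ):ℂ) - ((Sfin (m:ℝ) (k+1) N : ℝ):ℂ)) * x ^ (k+1) := by
    rw [hd, Summable.tsum_eq_zero_add hdsumm, hzero, zero_add]
  have hterm : ∀ k : ℕ,
      (((Sfin (m:ℝ) (k+1) (N+1) : ℝ):ℂ) - ((Sfin (m:ℝ) (k+1) N : ℝ):ℂ)) * x ^ (k+1)
      = (x / (((N:ℕ):ℂ)+1) ^ m) * (((Sfin (m:ℝ) k (N+1) : ℝ):ℂ) * x ^ k) := by
    intro k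
    have := h1 k
    have hc : ((Sfin (m:ℝ) (k+1) (N+1) : ℝ):ℂ)
        = ((Sfin (m:ℝ) (k+1) N : ℝ):ℂ) + ((((N:ℝ)+1) ^ (m:ℕ))⁻¹ : ℝ) * ((Sfin (m:ℝ) k (N+1) : ℝ):ℂ) := by
      rw [this]; push_cast; ring
    rw [hc]
    push_cast
    rw [pow_succ]
    field_simp
    ring
  have hmain : Gfun m x (N+1) - Gfun m x N
      = (x / (((N:ℕ):ℂ)+1) ^ m) * Gfun m x (N+1) := by
    rw [hshift]
    rw [show Gfun m x (N+1) = ∑' k : ℕ, ((Sfin (m:ℝ) k (N+1) : ℝ):ℂ) * x ^ k from rfl]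
    rw [← tsum_mul_left]
    exact tsum_congr hterm
  linear_combination hmain
lemma pfun_factor_ne (m : ℕ) (hm : 2 ≤ m) {x : ℂ} (hx : ‖x‖ < 1) {n : ℕ} (hn : 1 ≤ n) :
    1 - x / ((n:ℕ):ℂ) ^ m ≠ 0 := by
  intro h
  have hx1 : x / ((n:ℕ):ℂ) ^ m = 1 := by linear_combination -h
  have hn1 : (1:ℝ) ≤ ((n:ℝ)) ^ m := one_le_pow₀ (by exact_mod_cast hn : (1:ℝ) ≤ (n:ℝ))
  have habs : ‖x / ((n:ℕ):ℂ) ^ m‖ < 1 := by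
    rw [norm_div, norm_pow]
    have : ‖((n:ℕ):ℂ)‖ = (n:ℝ) := by simp
    rw [this]
    calc ‖x‖ / (n:ℝ) ^ m ≤ ‖x‖ / 1 := by
          apply div_le_div_of_nonneg_left ?_ ?_ hn1 <;> [skip; norm_num] <;> positivity
      _ = ‖x‖ := by norm_num
      _ < 1 := hx
  rw [hx1] at habs
  simp at habs
lemma pfun_ne_zero (m : ℕ) (hm : 2 ≤ m) {x : ℂ} (hx : ‖x‖ < 1) (N : ℕ) :
    Pfun m x N ≠ 0 := by
  rw [Pfun, Finset.prod_ne_zero_iff]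
  intro n hn
  exact pfun_factor_ne m hm hx (Finset.mem_Icc.mp hn).1

lemma gfun_mul_pfun (m : ℕ) (hm : 2 ≤ m) {x : ℂ} (hx : ‖x‖ < 1) :
    ∀ N, Gfun m x N * Pfun m x N = 1 := by
  intro N
  induction N with
  | zero => simp [gfun_zero, Pfun]
  | succ N ih =>
      have hP : Pfun m x (N+1) = Pfun m x N * (1 - x / (((N:ℕ):ℂ)+1) ^ m) := by
        rw [Pfun, Pfun, Finset.prod_Icc_succ_top (by omega)]
        push_cast
        ring
      calc Gfun m x (N+1) * Pfun m x (N+1)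
          = (Gfun m x (N+1) * (1 - x / (((N:ℕ):ℂ)+1) ^ m)) * Pfun m x N := by
            rw [hP]; ring
        _ = Gfun m x N * Pfun m x N := by rw [gfun_rec m hm hx N]
        _ = 1 := ih

lemma gfun_eq_pfun_inv (m : ℕ) (hm : 2 ≤ m) {x : ℂ} (hx : ‖x‖ < 1) (N : ℕ) :
    Gfun m x N = (Pfun m x N)⁻¹ :=
  eq_inv_of_mul_eq_one_left (gfun_mul_pfun m hm hx N)

lemma prod_sub_pow (m : ℕ) (hm : 0 < m) {ξ : ℂ} (hξ : IsPrimitiveRoot ξ m) (t c : ℂ) :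
    ∏ j ∈ Finset.range m, (c - ξ ^ j * t) = c ^ m - t ^ m := by
  have h := X_pow_sub_C_eq_prod hξ hm (rfl : t ^ m = t ^ m)
  have h2 := congrArg (Polynomial.eval c) h
  simpa [Polynomial.eval_prod] using h2.symm
lemma gammaSeq_prod (m : ℕ) (hm : 2 ≤ m) {ξ : ℂ} (hξ : IsPrimitiveRoot ξ m)
    {t : ℂ} (ht : ‖t‖ < 1) {N : ℕ} (hN : 1 ≤ N) :
    ∏ j ∈ Finset.range m, Complex.GammaSeq (1 - ξ ^ j * t) N
      = ((N:ℂ) / ((N:ℂ)+1)) ^ m * Gfun m (t ^ m) (N+1) := by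
  have hm0 : 0 < m := by omega
  have hN0 : ((N:ℕ):ℂ) ≠ 0 := Nat.cast_ne_zero.mpr (by omega)
  have hx : ‖t ^ m‖ < 1 := by
    rw [norm_pow]
    exact pow_lt_one₀ (norm_nonneg t) ht (by omega)
  have hsum : ∑ j ∈ Finset.range m, (1 - ξ ^ j * t) = (m:ℂ) := by
    rw [Finset.sum_sub_distrib, Finset.sum_const, Finset.card_range, ← Finset.sum_mul,
      hξ.geom_sum_eq_zero (by omega), zero_mul, sub_zero, nsmul_eq_mul, mul_one]
  have hcpow : ∏ j ∈ Finset.range m, ((N:ℕ):ℂ) ^ (1 - ξ ^ j * t) = ((N:ℕ):ℂ) ^ m := by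
    have hc : ∀ j ∈ Finset.range m, ((N:ℕ):ℂ) ^ (1 - ξ ^ j * t)
        = Complex.exp (Complex.log ((N:ℕ):ℂ) * (1 - ξ ^ j * t)) := fun j _ =>
      Complex.cpow_def_of_ne_zero hN0 _
    rw [Finset.prod_congr rfl hc, ← Complex.exp_sum, ← Finset.mul_sum, hsum,
      mul_comm, Complex.exp_nat_mul, Complex.exp_log hN0]
  have hden : ∏ j ∈ Finset.range m, ∏ i ∈ Finset.range (N+1), ((1 - ξ ^ j * t) + (i:ℂ))
      = ((Nat.factorial (N+1) : ℕ):ℂ) ^ m * Pfun m (t ^ m) (N+1) := by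
    rw [Finset.prod_comm]
    have h1 : ∀ i ∈ Finset.range (N+1),
        ∏ j ∈ Finset.range m, ((1 - ξ ^ j * t) + (i:ℂ)) = ((i:ℂ)+1) ^ m - t ^ m := by
      intro i _
      rw [show (∏ j ∈ Finset.range m, ((1 - ξ ^ j * t) + (i:ℂ)))
          = ∏ j ∈ Finset.range m, (((i:ℂ)+1) - ξ ^ j * t) from
          Finset.prod_congr rfl (fun j _ => by ring),
        prod_sub_pow m hm0 hξ]
    rw [Finset.prod_congr rfl h1]
    have h2 : ∀ i ∈ Finset.range (N+1), ((i:ℂ)+1) ^ m - t ^ m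
        = ((i:ℂ)+1) ^ m * (1 - t ^ m / ((i:ℂ)+1) ^ m) := by
      intro i _
      have hne : ((i:ℂ)+1) ≠ 0 := Nat.cast_add_one_ne_zero i
      field_simp
    rw [Finset.prod_congr rfl h2, Finset.prod_mul_distrib, Finset.prod_pow]
    have h3 : ∏ i ∈ Finset.range (N+1), ((i:ℂ)+1) = ((Nat.factorial (N+1) : ℕ):ℂ) := by
      have := congrArg (Nat.cast : ℕ → ℂ) (Finset.prod_range_add_one_eq_factorial (N+1))
      push_cast at this
      exact this
    have h4 : ∏ i ∈ Finset.range (N+1), (1 - t ^ m / ((i:ℂ)+1) ^ m)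
        = Pfun m (t ^ m) (N+1) := by
      rw [Pfun, icc_prod_eq_range]
      refine Finset.prod_congr rfl fun i _ => ?_
      push_cast
      ring
    rw [h3, h4]
  simp only [Complex.GammaSeq]
  rw [Finset.prod_div_distrib, Finset.prod_mul_distrib, Finset.prod_const, Finset.card_range,
    hcpow, hden, gfun_eq_pfun_inv m hm hx (N+1)]
  have hfact : ((Nat.factorial (N+1) : ℕ):ℂ) = (((N:ℕ):ℂ)+1) * ((Nat.factorial N : ℕ):ℂ) := by
    push_cast [Nat.factorial_succ]
    ring
  rw [hfact, mul_pow]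
  have hP := pfun_ne_zero m hm hx (N+1)
  have hfac0 : ((Nat.factorial N : ℕ):ℂ) ≠ 0 := Nat.cast_ne_zero.mpr (Nat.factorial_ne_zero N)
  have hN1 : (((N:ℕ):ℂ)+1) ≠ 0 := Nat.cast_add_one_ne_zero N
  field_simp
  rw [← mul_pow]; congr 1; field_simp
/-- for integer `m ≥ 2`, `ξ = e^{2πi/m}` and `|t| < 1`,
`∑ₖ S_{m,k}(∞) t^{mk} = ∏_{j=0}^{m-1} Γ(1 - ξʲ t)`. -/
theorem statement5 (m : ℕ) (hm : 2 ≤ m) (t : ℂ) (ht : ‖t‖ < 1) :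
    ∑' k : ℕ, (Sinf m k : ℂ) * t ^ (m * k) =
      ∏ j ∈ Finset.range m,
        Complex.Gamma (1 - Complex.exp (2 * Real.pi * Complex.I / m) ^ j * t) := by
  have htn : ‖t‖ < 1 := ht
  set ξ : ℂ := Complex.exp (2 * Real.pi * Complex.I / m) with hξdef
  have hξ : IsPrimitiveRoot ξ m := Complex.isPrimitiveRoot_exp m (by omega)
  have hx : ‖t ^ m‖ < 1 := by
    rw [norm_pow]; exact pow_lt_one₀ (norm_nonneg t) htn (by omega)
  set L : ℂ := ∑' k : ℕ, ((Sinf (m:ℝ) k : ℝ):ℂ) * (t ^ m) ^ k with hL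
  have hLHS : (∑' k : ℕ, ((Sinf (m:ℝ) k : ℝ):ℂ) * t ^ (m * k)) = L := by
    rw [hL]; exact tsum_congr fun k => by rw [pow_mul]
  have hGtend : Filter.Tendsto (fun N => Gfun m (t ^ m) N) Filter.atTop (nhds L) := by
    rw [hL]
    apply tendsto_tsum_of_dominated_convergence (bound := fun k : ℕ => 3 * ‖t ^ m‖ ^ k)
    · exact (summable_geometric_of_norm_lt_one (K := ℝ) (by simpa using hx)).mul_left 3
    · intro k
      exact ((Complex.continuous_ofReal.tendsto _).comp (sfin_tendsto_sinf m hm k)).mul_const _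
    · exact Filter.Eventually.of_forall fun N k => norm_sfin_term_le m hm _ k N
  have hGtend1 : Filter.Tendsto (fun N => Gfun m (t ^ m) (N+1)) Filter.atTop (nhds L) :=
    hGtend.comp (Filter.tendsto_add_atTop_nat 1)
  have hr1 : Filter.Tendsto (fun N : ℕ => ((N:ℂ) / ((N:ℂ)+1))) Filter.atTop (nhds 1) := by
    have h0 : Filter.Tendsto (fun N : ℕ => ((1/((N:ℝ)+1) : ℝ) : ℂ)) Filter.atTop
        (nhds (((0:ℝ)):ℂ)) :=
      (Complex.continuous_ofReal.tendsto _).comp tendsto_one_div_add_atTop_nhds_zero_nat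
    have h1 : Filter.Tendsto (fun N : ℕ => 1 - ((1/((N:ℝ)+1) : ℝ) : ℂ)) Filter.atTop (nhds 1) := by
      simpa using (tendsto_const_nhds (x := (1:ℂ)) (f := Filter.atTop)).sub h0
    refine h1.congr fun N => ?_
    have hne : ((N:ℂ)+1) ≠ 0 := Nat.cast_add_one_ne_zero N
    push_cast
    field_simp
    ring
  have hratio : Filter.Tendsto (fun N : ℕ => ((N:ℂ) / ((N:ℂ)+1)) ^ m) Filter.atTop (nhds 1) := by
    simpa using hr1.pow m
  have hG2 := hratio.mul hGtend1
  rw [one_mul] at hG2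
  have hEq : (fun N : ℕ => ∏ j ∈ Finset.range m, Complex.GammaSeq (1 - ξ ^ j * t) N)
      =ᶠ[Filter.atTop] (fun N : ℕ => ((N:ℂ) / ((N:ℂ)+1)) ^ m * Gfun m (t ^ m) (N+1)) :=
    Filter.eventually_atTop.mpr ⟨1, fun N hN => gammaSeq_prod m hm hξ htn hN⟩
  have hΓ : Filter.Tendsto
      (fun N : ℕ => ∏ j ∈ Finset.range m, Complex.GammaSeq (1 - ξ ^ j * t) N)
      Filter.atTop (nhds (∏ j ∈ Finset.range m, Complex.Gamma (1 - ξ ^ j * t))) :=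
    tendsto_finset_prod _ fun j _ => Complex.GammaSeq_tendsto_Gamma _
  have hfin := tendsto_nhds_unique (hΓ.congr' hEq) hG2
  rw [hLHS, ← hfin]
end

section
/- ζ(2) = π²/6 = (1/2) ∫_0^1 log²(z/(1−z)) dz. -/
open Real MeasureTheory Set Filter intervalIntegral
open scoped Topology

-- continuity helpers
lemma cont_sqrt_mul_log : ContinuousOn (fun z : ℝ => Real.sqrt z * Real.log z) (Ici 0) := by
  have h : ContinuousOn (fun z : ℝ => 2 * (Real.sqrt z * Real.log (Real.sqrt z))) (Ici 0) :=
    (continuous_const.mul (continuous_mul_log.comp continuous_sqrt)).continuousOn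
  refine h.congr fun z hz => ?_
  beta_reduce; rw [Real.log_sqrt hz]; ring

lemma cont_mul_log_sq : ContinuousOn (fun z : ℝ => z * Real.log z ^ 2) (Ici 0) := by
  have h := (cont_sqrt_mul_log.mul cont_sqrt_mul_log)
  refine h.congr fun z hz => ?_
  have : Real.sqrt z * Real.sqrt z = z := Real.mul_self_sqrt hz
  simp only [Pi.mul_apply]
  ring_nf
  nlinarith [this]

noncomputable def Gf (k : ℕ) (z : ℝ) : ℝ :=
  z ^ (k+1) / ((k:ℝ)+1)^2 - z ^ (k+1) * Real.log z / ((k:ℝ)+1)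

lemma Gf_cont (k : ℕ) : ContinuousOn (Gf k) (Ici 0) := by
  apply ContinuousOn.sub
  · exact (continuous_pow (k+1)).continuousOn.div_const _
  · apply ContinuousOn.div_const
    have h : ContinuousOn (fun z : ℝ => z ^ k * (z * Real.log z)) (Ici 0) :=
      ((continuous_pow k).continuousOn.mul continuous_mul_log.continuousOn)
    refine h.congr fun z hz => ?_
    ring

lemma Gf_deriv (k : ℕ) {z : ℝ} (hz : z ∈ Ioo (0:ℝ) 1) :
    HasDerivAt (Gf k) (z ^ k * (-Real.log z)) z := by
  have hz0 : z ≠ 0 := ne_of_gt hz.1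
  have h1 : HasDerivAt (fun z : ℝ => z ^ (k+1) / ((k:ℝ)+1)^2)
      (((k:ℝ)+1) * z ^ k / ((k:ℝ)+1)^2) z := by
    simpa using (hasDerivAt_pow (k+1) z).div_const (((k:ℝ)+1)^2)
  have h2 : HasDerivAt (fun z : ℝ => z ^ (k+1) * Real.log z / ((k:ℝ)+1))
      ((((k:ℝ)+1) * z ^ k * Real.log z + z ^ (k+1) * z⁻¹) / ((k:ℝ)+1)) z := by
    simpa using (((hasDerivAt_pow (k+1) z).mul (Real.hasDerivAt_log hz0)).div_const (((k:ℝ)+1)))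
  have := h1.sub h2
  refine this.congr_deriv ?_
  have hk : ((k:ℝ)+1) ≠ 0 := by positivity
  field_simp
  ring

lemma Gf_integrable (k : ℕ) :
    IntervalIntegrable (fun z : ℝ => z ^ k * (-Real.log z)) volume 0 1 := by
  apply intervalIntegrable_deriv_of_nonneg (g := Gf k)
  · rw [uIcc_of_le (by norm_num : (0:ℝ) ≤ 1)]
    exact (Gf_cont k).mono (Icc_subset_Ici_self)
  · intro x hx
    rw [min_eq_left (by norm_num : (0:ℝ) ≤ 1), max_eq_right (by norm_num : (0:ℝ) ≤ 1)] at hx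
    exact Gf_deriv k hx
  · intro x hx
    rw [min_eq_left (by norm_num : (0:ℝ) ≤ 1), max_eq_right (by norm_num : (0:ℝ) ≤ 1)] at hx
    have : Real.log x ≤ 0 := Real.log_nonpos (le_of_lt hx.1) (le_of_lt hx.2)
    have := pow_nonneg (le_of_lt hx.1) k
    nlinarith

lemma Gf_integral (k : ℕ) :
    ∫ z in (0:ℝ)..1, z ^ k * (-Real.log z) = 1 / ((k:ℝ)+1)^2 := by
  have h := integral_eq_sub_of_hasDerivAt_of_tendsto (f := Gf k)
    (f' := fun z => z ^ k * (-Real.log z)) (by norm_num : (0:ℝ) < 1)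
    (fun x hx => Gf_deriv k hx) (Gf_integrable k)
    (fa := 0) (fb := 1 / ((k:ℝ)+1)^2) ?_ ?_
  · rw [h]; ring
  · have hc : ContinuousWithinAt (Gf k) (Ici 0) 0 := (Gf_cont k) 0 (by simp)
    have h0 : Gf k 0 = 0 := by simp [Gf]
    have ht := hc.tendsto
    rw [h0] at ht
    exact ht.mono_left (nhdsWithin_mono _ Ioi_subset_Ici_self)
  · have hc : ContinuousAt (Gf k) 1 := by
      have : ContinuousAt (fun z : ℝ => z ^ (k+1) / ((k:ℝ)+1)^2 - z ^ (k+1) * Real.log z / ((k:ℝ)+1)) 1 := by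
        fun_prop (disch := norm_num)
      exact this
    have h1 : Gf k 1 = 1 / ((k:ℝ)+1)^2 := by
      simp [Gf]
    have ht := hc.tendsto
    rw [h1] at ht
    exact ht.mono_left nhdsWithin_le_nhds

noncomputable def Ff (z : ℝ) : ℝ := z * Real.log z ^ 2 - 2 * (z * Real.log z) + 2 * z

lemma Ff_cont : ContinuousOn Ff (Ici 0) :=
  (cont_mul_log_sq.sub ((continuous_const.mul continuous_mul_log).continuousOn)).add
    (continuous_const.mul continuous_id).continuousOn

lemma Ff_deriv {z : ℝ} (hz : z ∈ Ioo (0:ℝ) 1) :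
    HasDerivAt Ff (Real.log z ^ 2) z := by
  have hz0 : z ≠ 0 := ne_of_gt hz.1
  have hlog := Real.hasDerivAt_log hz0
  have h1 : HasDerivAt (fun z : ℝ => z * Real.log z ^ 2)
      (1 * Real.log z ^ 2 + z * (2 * Real.log z ^ 1 * z⁻¹)) z :=
    (hasDerivAt_id z).mul (hlog.pow 2)
  have h2 : HasDerivAt (fun z : ℝ => 2 * (z * Real.log z))
      (2 * (1 * Real.log z + z * z⁻¹)) z :=
    ((hasDerivAt_id z).mul hlog).const_mul 2
  have h3 : HasDerivAt (fun z : ℝ => 2 * z) 2 z := by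
    simpa using (hasDerivAt_id z).const_mul (2:ℝ)
  have := (h1.sub h2).add h3
  refine this.congr_deriv ?_
  field_simp
  ring

lemma logsq_integrable : IntervalIntegrable (fun z : ℝ => Real.log z ^ 2) volume 0 1 := by
  apply intervalIntegrable_deriv_of_nonneg (g := Ff)
  · rw [uIcc_of_le (by norm_num : (0:ℝ) ≤ 1)]
    exact Ff_cont.mono Icc_subset_Ici_self
  · intro x hx
    rw [min_eq_left (by norm_num : (0:ℝ) ≤ 1), max_eq_right (by norm_num : (0:ℝ) ≤ 1)] at hx
    exact Ff_deriv hx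
  · intro x _; positivity

lemma logsq_integral : ∫ z in (0:ℝ)..1, Real.log z ^ 2 = 2 := by
  have h := integral_eq_sub_of_hasDerivAt_of_tendsto (f := Ff)
    (f' := fun z => Real.log z ^ 2) (by norm_num : (0:ℝ) < 1)
    (fun x hx => Ff_deriv hx) logsq_integrable (fa := 0) (fb := 2) ?_ ?_
  · rw [h]; ring
  · have hc : ContinuousWithinAt Ff (Ici 0) 0 := Ff_cont 0 (by simp)
    have h0 : Ff 0 = 0 := by simp [Ff]
    have ht := hc.tendsto
    rw [h0] at ht
    exact ht.mono_left (nhdsWithin_mono _ Ioi_subset_Ici_self)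
  · have hc : ContinuousAt Ff 1 := by
      have : ContinuousAt (fun z : ℝ => z * Real.log z ^ 2 - 2 * (z * Real.log z) + 2 * z) 1 := by
        fun_prop (disch := norm_num)
      exact this
    have h1 : Ff 1 = 2 := by simp [Ff]
    have ht := hc.tendsto
    rw [h1] at ht
    exact ht.mono_left nhdsWithin_le_nhds

lemma logsq1_integrable :
    IntervalIntegrable (fun z : ℝ => Real.log (1 - z) ^ 2) volume 0 1 := by
  have := (logsq_integrable.comp_sub_left 1).symm
  simpa using this

lemma logsq1_integral : ∫ z in (0:ℝ)..1, Real.log (1 - z) ^ 2 = 2 := by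
  have := intervalIntegral.integral_comp_sub_left (a := 0) (b := 1)
    (fun z : ℝ => Real.log z ^ 2) 1
  simpa [logsq_integral] using this

lemma cross_integrable :
    IntervalIntegrable (fun z : ℝ => Real.log z * Real.log (1 - z)) volume 0 1 := by
  have hb : IntervalIntegrable
      (fun z : ℝ => Real.log z ^ 2 / 2 + Real.log (1 - z) ^ 2 / 2) volume 0 1 :=
    (logsq_integrable.div_const 2).add (logsq1_integrable.div_const 2)
  apply hb.mono_fun
  · apply Measurable.aestronglyMeasurable
    exact (Real.measurable_log.mul (Real.measurable_log.comp (measurable_const.sub measurable_id)))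
  · apply Filter.Eventually.of_forall
    intro z
    simp only [Real.norm_eq_abs]
    have h : |Real.log z * Real.log (1 - z)| ≤ Real.log z ^ 2 / 2 + Real.log (1 - z) ^ 2 / 2 := by
      rw [abs_mul]
      nlinarith [sq_abs (Real.log z), sq_abs (Real.log (1-z)),
        sq_nonneg (|Real.log z| - |Real.log (1-z)|)]
    exact h.trans (le_abs_self _)

lemma hasSum_S : HasSum (fun n : ℕ => 1/((n:ℝ)+1) * (1/((n:ℝ)+2)^2)) (2 - Real.pi^2/6) := by
  have h2 : HasSum (fun n : ℕ => 1/((n:ℝ)+2)^2) (Real.pi^2/6 - 1) := by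
    have h := (hasSum_nat_add_iff' (f := fun n : ℕ => 1/(n:ℝ)^2) 2).mpr hasSum_zeta_two
    rw [Finset.sum_range_succ, Finset.sum_range_one] at h
    norm_num at h
    convert h using 2 with n
    rfl
    push_cast
    ring
  have h1 : HasSum (fun n : ℕ => 1/((n:ℝ)+1) - 1/((n:ℝ)+2)) 1 := by
    rw [hasSum_iff_tendsto_nat_of_nonneg]
    · have hs : ∀ n : ℕ, ∑ i ∈ Finset.range n,
          (1/((i:ℝ)+1) - 1/((i:ℝ)+2)) = 1 - 1/((n:ℝ)+1) := by
        intro n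
        have e1 : ∑ i ∈ Finset.range n, (1/((i:ℝ)+1) - 1/((i:ℝ)+2))
            = ∑ i ∈ Finset.range n,
              ((fun i : ℕ => 1/((i:ℝ)+1)) i - (fun i : ℕ => 1/((i:ℝ)+1)) (i+1)) :=
          Finset.sum_congr rfl fun i _ => by push_cast; ring
        rw [e1, Finset.sum_range_sub']
        norm_num
      simp only [hs]
      have : Tendsto (fun n : ℕ => 1/((n:ℝ)+1)) atTop (𝓝 0) :=
        tendsto_one_div_add_atTop_nhds_zero_nat
      simpa using (tendsto_const_nhds (x := (1:ℝ))).sub this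
    · intro i
      have h1 : (0:ℝ) < (i:ℝ)+1 := by positivity
      have h2 : (i:ℝ)+1 ≤ (i:ℝ)+2 := by linarith
      have := one_div_le_one_div_of_le h1 h2
      linarith
  have h := h1.sub h2
  have heq : (fun n : ℕ => (1/((n:ℝ)+1) - 1/((n:ℝ)+2)) - 1/((n:ℝ)+2)^2)
      = fun n : ℕ => 1/((n:ℝ)+1) * (1/((n:ℝ)+2)^2) := by
    funext n
    have hn1 : ((n:ℝ)+1) ≠ 0 := by positivity
    have hn2 : ((n:ℝ)+2) ≠ 0 := by positivity
    field_simp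
    ring
  rw [heq] at h
  rw [show (2:ℝ) - Real.pi^2/6 = 1 - (Real.pi^2/6 - 1) by ring]
  exact h

lemma Fn_integrableOn (n : ℕ) :
    IntegrableOn (fun z : ℝ => (-Real.log z) * (z^(n+1)/((n:ℝ)+1))) (Ioo 0 1) volume := by
  have h := (Gf_integrable (n+1)).1
  have h' : IntegrableOn (fun z : ℝ => z^(n+1) * (-Real.log z)) (Ioo (0:ℝ) 1) volume :=
    h.mono_set Ioo_subset_Ioc_self
  have hI := h'.const_mul (1/((n:ℝ)+1))
  apply hI.congr
  apply Filter.Eventually.of_forall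
  intro z
  ring

lemma Fn_integral (n : ℕ) :
    ∫ z in Ioo (0:ℝ) 1, (-Real.log z) * (z^(n+1)/((n:ℝ)+1))
      = 1/((n:ℝ)+1) * (1/((n:ℝ)+2)^2) := by
  have h := Gf_integral (n+1)
  rw [intervalIntegral.integral_of_le (by norm_num : (0:ℝ) ≤ 1),
    MeasureTheory.integral_Ioc_eq_integral_Ioo] at h
  calc ∫ z in Ioo (0:ℝ) 1, (-Real.log z) * (z^(n+1)/((n:ℝ)+1))
      = ∫ z in Ioo (0:ℝ) 1, (1/((n:ℝ)+1)) * (z^(n+1) * (-Real.log z)) := by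
        apply setIntegral_congr_fun measurableSet_Ioo
        intro z _; ring
    _ = (1/((n:ℝ)+1)) * ∫ z in Ioo (0:ℝ) 1, z^(n+1) * (-Real.log z) :=
        by rw [MeasureTheory.integral_const_mul]
    _ = 1/((n:ℝ)+1) * (1/((n:ℝ)+2)^2) := by rw [h]; push_cast; ring_nf

lemma Fn_hasSum {z : ℝ} (hz : z ∈ Ioo (0:ℝ) 1) :
    HasSum (fun n : ℕ => (-Real.log z) * (z^(n+1)/((n:ℝ)+1)))
      (Real.log z * Real.log (1 - z)) := by
  have habs : |z| < 1 := by rw [abs_of_pos hz.1]; exact hz.2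
  have h := (Real.hasSum_pow_div_log_of_abs_lt_one habs).mul_left (-Real.log z)
  rw [← neg_mul_neg (Real.log z)]
  exact h

set_option maxHeartbeats 1000000 in
lemma cross_integral :
    ∫ z in (0:ℝ)..1, Real.log z * Real.log (1 - z) = 2 - Real.pi^2/6 := by
  rw [intervalIntegral.integral_of_le (by norm_num : (0:ℝ) ≤ 1),
    MeasureTheory.integral_Ioc_eq_integral_Ioo]
  have hnorm : ∀ n : ℕ, ∫ z in Ioo (0:ℝ) 1, ‖(-Real.log z) * (z^(n+1)/((n:ℝ)+1))‖
      = 1/((n:ℝ)+1) * (1/((n:ℝ)+2)^2) := by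
    intro n
    rw [← Fn_integral n]
    apply setIntegral_congr_fun measurableSet_Ioo
    intro z hz
    simp only [Real.norm_eq_abs]
    rw [abs_of_nonneg]
    have h1 : 0 ≤ -Real.log z := by
      simpa using Real.log_nonpos hz.1.le hz.2.le
    have hz0 : (0:ℝ) ≤ z := hz.1.le
    have h2 : (0:ℝ) ≤ z^(n+1)/((n:ℝ)+1) := by positivity
    exact mul_nonneg h1 h2
  have hsum : Summable (fun n : ℕ =>
      ∫ z in Ioo (0:ℝ) 1, ‖(-Real.log z) * (z^(n+1)/((n:ℝ)+1))‖) := by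
    simp only [hnorm]
    have hbase : Summable (fun n : ℕ => 1/((n:ℝ)+1)^2) := by
      have := summable_one_div_nat_pow.mpr (le_refl 2)
      exact ((summable_nat_add_iff 1).mpr this).congr fun n => by push_cast; ring_nf
    have hle : ∀ n : ℕ, 1/((n:ℝ)+1) * (1/((n:ℝ)+2)^2) ≤ 1/((n:ℝ)+1)^2 := by
      intro n
      have h1 : (0:ℝ) < (n:ℝ)+1 := by positivity
      have h2 : ((n:ℝ)+1)^2 ≤ ((n:ℝ)+1) * ((n:ℝ)+2)^2 := by nlinarith
      rw [div_mul_div_comm, one_mul]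
      exact one_div_le_one_div_of_le (by positivity) h2
    exact Summable.of_nonneg_of_le (fun n => by positivity) hle hbase
  have hswap := MeasureTheory.integral_tsum_of_summable_integral_norm
    (F := fun (n : ℕ) (z : ℝ) => (-Real.log z) * (z^(n+1)/((n:ℝ)+1)))
    (μ := volume.restrict (Ioo (0:ℝ) 1)) (fun n => Fn_integrableOn n) hsum
  have hcong : ∫ z in Ioo (0:ℝ) 1, Real.log z * Real.log (1 - z)
      = ∫ z in Ioo (0:ℝ) 1, ∑' n : ℕ, (-Real.log z) * (z^(n+1)/((n:ℝ)+1)) := by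
    apply setIntegral_congr_fun measurableSet_Ioo
    intro z hz
    exact (Fn_hasSum hz).tsum_eq.symm
  rw [hcong, ← hswap]
  simp only [Fn_integral]
  exact hasSum_S.tsum_eq

/-- `ζ(2) = π²/6 = (1/2)∫₀¹ log²(z/(1-z)) dz`. -/
theorem statement12 :
    (∑' n : ℕ+, (1 : ℝ) / (n : ℝ) ^ 2 = Real.pi ^ 2 / 6) ∧
    Real.pi ^ 2 / 6 = (1 / 2) * ∫ z in (0:ℝ)..1, (Real.log (z / (1 - z))) ^ 2 := by
  constructor
  · have hinj : Function.Injective ((↑) : ℕ+ → ℕ) := PNat.coe_injective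
    have h0 : ∀ x ∉ Set.range ((↑) : ℕ+ → ℕ), (1:ℝ)/(x:ℝ)^2 = 0 := by
      intro x hx
      have hx0 : x = 0 := by
        by_contra h
        exact hx ⟨⟨x, Nat.pos_of_ne_zero h⟩, rfl⟩
      simp [hx0]
    have h := (hinj.hasSum_iff h0).mpr hasSum_zeta_two
    have := h.tsum_eq
    simpa using this
  · have hEq : Set.EqOn (fun z : ℝ => Real.log (z / (1 - z)) ^ 2)
        (fun z : ℝ => Real.log z ^ 2 - 2 * (Real.log z * Real.log (1 - z))
          + Real.log (1 - z) ^ 2) (Set.uIcc (0:ℝ) 1) := by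
      intro z hz
      rw [Set.uIcc_of_le (by norm_num : (0:ℝ) ≤ 1)] at hz
      rcases eq_or_lt_of_le hz.1 with h0 | h0
      · simp [← h0]
      rcases eq_or_lt_of_le hz.2 with h1 | h1
      · simp [h1]
      have hz0 : z ≠ 0 := ne_of_gt h0
      have hz1 : (1:ℝ) - z ≠ 0 := by intro h; apply absurd h1; linarith [sub_eq_zero.mp h]
      simp only
      rw [Real.log_div hz0 hz1]
      ring
    rw [intervalIntegral.integral_congr hEq]
    rw [intervalIntegral.integral_add
        ((logsq_integrable).sub (cross_integrable.const_mul 2)) logsq1_integrable,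
      intervalIntegral.integral_sub logsq_integrable (cross_integrable.const_mul 2),
      intervalIntegral.integral_const_mul, logsq_integral, logsq1_integral, cross_integral]
    ring
end
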